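/- Let n be even and let G be the event graph that is a cycle v_1, ..., v_n, v_1 where, for i = 1, ..., n/2, node v_i is labeled 'i i' (insert element i) and node v_{n+1-i} is labeled 'd i' (delete element i). Then for every subset S ⊆ {1, ..., n/2} there exists a walk in G starting at v_1 whose lifting lt(·, ∅) ends at a node of dec(G) of the form (v_1, S) or (v_n, S). Consequently, the set of nodes of dec(G) reachable from (v_1, ∅) has cardinality at least 2^{n/2}. -/

import Mathlib

/-- The update to the active set when a walk on the event graph enters node `w`:
insert `elt w` if `w` is an insertion node (`ins w = true`), delete it otherwise. -/
def decStep {V U : Type*} (ins : V → Bool) (elt : V → U) (w : V) (X : Set U) : Set U :=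
  if ins w = true then X ∪ {elt w} else X \ {elt w}

/-- The edge relation of the decorated graph `dec(G)`: `(u, X) → (v, Y)` iff `uv` is an
edge of `G` and `Y` is obtained from `X` by performing the operation at `v`. -/
def decAdj {V U : Type*} (G : SimpleGraph V) (ins : V → Bool) (elt : V → U)
    (p q : V × Set U) : Prop :=
  G.Adj p.1 q.1 ∧ q.2 = decStep ins elt q.1 p.2

/-- A sink component of the relation `R`: a nonempty strongly connected set of
vertices that is closed under reachability (equivalently, a strongly connected
component with no edges leaving it). -/
def IsSinkComponent {α : Type*} (R : α → α → Prop) (C : Set α) : Prop :=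
  C.Nonempty ∧
  (∀ p ∈ C, ∀ q ∈ C, Relation.ReflTransGen R p q) ∧
  (∀ p ∈ C, ∀ q, Relation.ReflTransGen R p q → q ∈ C)

/-- The set decorating the final node of the lifting `lt(W, X)` of the walk `W`
(given as the list of its nodes) starting from the decorated node `(W.head, X)`:
the operations at all nodes of `W` after the first are applied to `X` in order. -/
def liftEndSet {V U : Type*} (ins : V → Bool) (elt : V → U) (X : Set U) (W : List V) : Set U :=
  W.tail.foldl (fun Y u => decStep ins elt u Y) X

/-- A certifying walk for the decorated node `(v, X)`: a closed walk `W` in `G`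
starting and ending at `v` such that every element of the universe is referred to
by the label of some node of `W`, and an element `x` lies in `X` exactly when the
last node of `W` whose label refers to `x` is an insertion node. -/
def IsCertifyingWalk {V U : Type*} (G : SimpleGraph V) (ins : V → Bool) (elt : V → U)
    (v : V) (X : Set U) (W : List V) : Prop :=
  W ≠ [] ∧ W.Chain' G.Adj ∧ W.head? = some v ∧ W.getLast? = some v ∧
  ∀ x : U, ∃ W₁ w W₂, W = W₁ ++ w :: W₂ ∧ elt w = x ∧
    (∀ u ∈ W₂, elt u ≠ x) ∧ (x ∈ X ↔ ins w = true)

namespace S12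

/-! ### Generic fold lemmas -/

variable {V U : Type*}

lemma foldl_no_touch (ins : V → Bool) (elt : V → U) (x : U) :
    ∀ (L : List V) (X : Set U), (∀ u ∈ L, elt u ≠ x) →
      (x ∈ L.foldl (fun Y u => decStep ins elt u Y) X ↔ x ∈ X)
  | [], X, _ => Iff.rfl
  | u :: L, X, h => by
      rw [List.foldl_cons, foldl_no_touch ins elt x L _ (fun v hv => h v (by simp [hv]))]
      have hux : elt u ≠ x := h u (by simp)
      unfold decStep
      split <;> simp [Ne.symm hux, hux]

lemma foldl_split (ins : V → Bool) (elt : V → U) (x : U) (w : V) (P C : List V) (X : Set U)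
    (hw : elt w = x) (hC : ∀ u ∈ C, elt u ≠ x) :
    (x ∈ (P ++ w :: C).foldl (fun Y u => decStep ins elt u Y) X ↔ ins w = true) := by
  rw [List.foldl_append, List.foldl_cons, foldl_no_touch ins elt x C _ hC]
  unfold decStep
  split <;> rename_i h <;> simp [hw, h]

/-! ### chain helpers -/

def run (p : ℕ → ℕ) (m : ℕ) : List ℕ := (List.range m).map p

lemma run_succ (p : ℕ → ℕ) (m : ℕ) : run p (m+1) = run p m ++ [p m] := by
  simp [run, List.range_succ]

lemma run_succ' (p : ℕ → ℕ) (m : ℕ) : run p (m+1) = p 0 :: run (fun i => p (i+1)) m := by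
  simp [run, List.range_succ_eq_map, List.map_map]

lemma mem_run {u : ℕ} {p : ℕ → ℕ} {m : ℕ} : u ∈ run p m ↔ ∃ i < m, p i = u := by
  simp [run]

lemma run_ne_nil (p : ℕ → ℕ) (m : ℕ) (hm : 0 < m) : run p m ≠ [] := by
  simp [run, List.range_eq_nil]; omega

lemma chain_run {R : ℕ → ℕ → Prop} :
    ∀ (m : ℕ) (p : ℕ → ℕ) (a : ℕ), (0 < m → R a (p 0)) →
      (∀ i, i + 1 < m → R (p i) (p (i+1))) → List.Chain R a (run p m)
  | 0, p, a, _, _ => by simpa [run] using List.Chain.nil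
  | m+1, p, a, h0, h => by
      rw [run_succ']
      exact List.Chain.cons (h0 (Nat.succ_pos m))
        (chain_run m _ _ (fun hm => h 0 (by omega)) (fun i hi => h (i+1) (by omega)))

lemma chain_append {α : Type*} {R : α → α → Prop} :
    ∀ (l₁ : List α) (a : α) (l₂ : List α), List.Chain R a l₁ →
      List.Chain R (l₁.getLastD a) l₂ → List.Chain R a (l₁ ++ l₂)
  | [], a, l₂, _, h₂ => h₂
  | b :: l₁, a, l₂, h₁, h₂ => by
      obtain ⟨hab, h₁'⟩ := List.chain_cons.mp h₁
      exact List.chain_cons.mpr ⟨hab, chain_append l₁ b l₂ h₁' (by rwa [List.getLastD_cons] at h₂)⟩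

/-! ### the cycle relation on ℕ -/

def Rn (n a b : ℕ) : Prop := (a % n + 1) % n = b % n ∨ (b % n + 1) % n = a % n

lemma Rn_succ {n a b : ℕ} (hb : b < n) (h : a + 1 = b) : Rn n a b := by
  left
  subst h
  rw [Nat.mod_eq_of_lt (by omega : a < n)]

lemma Rn_pred {n a b : ℕ} (ha : a < n) (h : b + 1 = a) : Rn n a b := by
  right
  subst h
  rw [Nat.mod_eq_of_lt (by omega : b < n)]

lemma Rn_wrap_succ {n a b : ℕ} (hn : 0 < n) (ha : a = n - 1) (hb : b = 0) : Rn n a b := by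
  left
  subst ha; subst hb
  rw [Nat.mod_eq_of_lt (by omega : n - 1 < n)]
  rw [(by omega : n - 1 + 1 = n)]
  simp

lemma Rn_wrap_pred {n a b : ℕ} (hn : 0 < n) (ha : a = 0) (hb : b = n - 1) : Rn n a b := by
  right
  subst ha; subst hb
  rw [Nat.mod_eq_of_lt (by omega : n - 1 < n)]
  rw [(by omega : n - 1 + 1 = n)]
  simp



/-! ### blocks -/

def tgt (σ : ℕ → Bool) (n j : ℕ) : ℕ :=
  match σ j with
  | true => j
  | false => n - 1 - j

def block (σ : ℕ → Bool) (n j : ℕ) : List ℕ :=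
  match σ (j+1), σ j with
  | true, true => [j]
  | true, false => run (fun i => j - i) (j+1) ++ run (fun i => n - 1 - i) (j+1)
  | false, true => run (fun i => n - 1 - j + i) (j+1) ++ run (fun i => i) (j+1)
  | false, false => [n - 1 - j]

def eltv (n k u : ℕ) : ℕ := if u < k then u else n - 1 - u

lemma block_chain (σ : ℕ → Bool) {n k : ℕ} (j : ℕ) (hn : n = 2*k) (hj : j + 2 ≤ k) :
    List.Chain (Rn n) (tgt σ n (j+1)) (block σ n j) := by
  have hn4 : 4 ≤ n := by omega
  cases h1 : σ (j+1) <;> cases h2 : σ j <;> simp only [block, tgt, h1, h2]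
  · exact List.Chain.cons (Rn_succ (by omega) (by omega)) List.Chain.nil
  · apply chain_append
    · exact chain_run _ _ _ (fun _ => Rn_succ (by omega) (by omega))
        (fun i hi => Rn_succ (by omega) (by omega))
    · rw [run_succ, List.getLastD_concat]
      apply chain_run
      · intro _
        exact Rn_wrap_succ (by omega) (by omega) (by omega)
      · intro i hi
        exact Rn_succ (by omega) (by omega)
  · apply chain_append
    · exact chain_run _ _ _ (fun _ => Rn_pred (by omega) (by omega))
        (fun i hi => Rn_pred (by omega) (by omega))
    · rw [run_succ, List.getLastD_concat]
      apply chain_run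
      · intro _
        exact Rn_wrap_pred (by omega) (by omega) (by omega)
      · intro i hi
        exact Rn_pred (by omega) (by omega)
  · exact List.Chain.cons (Rn_pred (by omega) (by omega)) List.Chain.nil

lemma block_split (σ : ℕ → Bool) (n j : ℕ) : ∃ P, block σ n j = P ++ [tgt σ n j] := by
  cases h1 : σ (j+1) <;> cases h2 : σ j <;> simp only [block, tgt, h1, h2]
  · exact ⟨[], rfl⟩
  · refine ⟨run (fun i => n - 1 - j + i) (j+1) ++ run (fun i => i) j, ?_⟩
    rw [run_succ (fun i => i) j, List.append_assoc]
  · refine ⟨run (fun i => j - i) (j+1) ++ run (fun i => n - 1 - i) j, ?_⟩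
    rw [run_succ (fun i => n - 1 - i) j, List.append_assoc]
  · exact ⟨[], rfl⟩

lemma block_mem (σ : ℕ → Bool) {n k : ℕ} (j : ℕ) (hn : n = 2*k) (hj : j + 2 ≤ k) :
    ∀ u ∈ block σ n j, u < n ∧ eltv n k u ≤ j := by
  intro u hu
  cases h1 : σ (j+1) <;> cases h2 : σ j <;>
    simp only [block, h1, h2, List.mem_append, mem_run, List.mem_singleton] at hu
  · subst hu; unfold eltv; split <;> omega
  · rcases hu with ⟨i, hi, rfl⟩ | ⟨i, hi, rfl⟩ <;> (unfold eltv; split <;> omega)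
  · rcases hu with ⟨i, hi, rfl⟩ | ⟨i, hi, rfl⟩ <;> (unfold eltv; split <;> omega)
  · subst hu; unfold eltv; split <;> omega

/-! ### concatenating blocks -/

def blocksFrom (σ : ℕ → Bool) (n : ℕ) : ℕ → List ℕ
  | 0 => block σ n 0
  | j+1 => block σ n (j+1) ++ blocksFrom σ n j

lemma bf_chain (σ : ℕ → Bool) {n k : ℕ} (hn : n = 2*k) :
    ∀ j, j + 2 ≤ k → List.Chain (Rn n) (tgt σ n (j+1)) (blocksFrom σ n j)
  | 0, hj => block_chain σ 0 hn hj
  | j+1, hj => by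
      apply chain_append
      · exact block_chain σ (j+1) hn hj
      · obtain ⟨P, hP⟩ := block_split σ n (j+1)
        rw [hP, List.getLastD_concat]
        exact bf_chain σ hn j (by omega)

lemma bf_mem (σ : ℕ → Bool) {n k : ℕ} (hn : n = 2*k) :
    ∀ j, j + 2 ≤ k → ∀ u ∈ blocksFrom σ n j, u < n ∧ eltv n k u ≤ j
  | 0, hj, u, hu => block_mem σ 0 hn hj u hu
  | j+1, hj, u, hu => by
      rcases List.mem_append.mp hu with h | h
      · exact block_mem σ (j+1) hn hj u h
      · have := bf_mem σ hn j (by omega) u h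
        exact ⟨this.1, by omega⟩

lemma bf_split (σ : ℕ → Bool) (n : ℕ) :
    ∀ m j, j ≤ m → ∃ P C, blocksFrom σ n m = P ++ tgt σ n j :: C ∧
      C = (if j = 0 then [] else blocksFrom σ n (j-1))
  | 0, j, hj => by
      interval_cases j
      obtain ⟨P, hP⟩ := block_split σ n 0
      exact ⟨P, [], by simpa [blocksFrom] using hP, by simp⟩
  | m+1, j, hj => by
      rcases Nat.lt_or_ge j (m+1) with h | h
      · obtain ⟨P, C, h1, h2⟩ := bf_split σ n m j (by omega)
        exact ⟨block σ n (m+1) ++ P, C, by simp [blocksFrom, h1], h2⟩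
      · have hjm : j = m + 1 := by omega
        subst hjm
        obtain ⟨P, hP⟩ := block_split σ n (m+1)
        refine ⟨P, blocksFrom σ n m, ?_, by simp⟩
        simp [blocksFrom, hP]

/-! ### top block and full tail -/

def btop (σ : ℕ → Bool) (k : ℕ) : List ℕ :=
  run (fun i => i + 1) k ++ (match σ (k-1) with | true => [k-1] | false => [])

def wtail (σ : ℕ → Bool) (n k : ℕ) : List ℕ :=
  btop σ k ++ (if k ≤ 1 then [] else blocksFrom σ n (k-2))

lemma btop_split (σ : ℕ → Bool) {n k : ℕ} (hn : n = 2*k) (hk : 1 ≤ k) :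
    ∃ P, btop σ k = P ++ [tgt σ n (k-1)] := by
  cases h : σ (k-1) <;> simp only [btop, tgt, h]
  case true => exact ⟨run (fun i => i+1) k, rfl⟩
  case false =>
    refine ⟨run (fun i => i+1) (k-1), ?_⟩
    calc run (fun i => i+1) k ++ [] = run (fun i => i+1) ((k-1)+1) := by
          rw [List.append_nil, (by omega : (k-1)+1 = k)]
      _ = run (fun i => i+1) (k-1) ++ [(k-1)+1] := run_succ _ _
      _ = run (fun i => i+1) (k-1) ++ [n-1-(k-1)] := by rw [(by omega : (k-1)+1 = n-1-(k-1))]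

lemma btop_chain (σ : ℕ → Bool) {n k : ℕ} (hn : n = 2*k) (hk : 1 ≤ k) :
    List.Chain (Rn n) 0 (btop σ k) := by
  apply chain_append
  · exact chain_run _ _ _ (fun _ => Rn_succ (by omega) (by omega))
      (fun i hi => Rn_succ (by omega) (by omega))
  · have hL : (run (fun i => i+1) k).getLastD 0 = k := by
      rw [(by omega : k = (k-1)+1), run_succ, List.getLastD_concat]
    rw [hL]
    cases σ (k-1)
    · exact List.Chain.nil
    · exact List.Chain.cons (Rn_pred (by omega) (by omega)) List.Chain.nil

lemma btop_mem (σ : ℕ → Bool) {n k : ℕ} (hn : n = 2*k) (hk : 1 ≤ k) :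
    ∀ u ∈ btop σ k, u < n ∧ eltv n k u ≤ k - 1 := by
  intro u hu
  rcases List.mem_append.mp hu with h | h
  · obtain ⟨i, hi, rfl⟩ := mem_run.mp h
    unfold eltv; split <;> omega
  · have : u = k - 1 := by
      revert h; cases σ (k-1) <;> simp
    subst this; unfold eltv; split <;> omega

lemma wtail_chain (σ : ℕ → Bool) {n k : ℕ} (hn : n = 2*k) (hk : 1 ≤ k) :
    List.Chain (Rn n) 0 (wtail σ n k) := by
  apply chain_append
  · exact btop_chain σ hn hk
  · obtain ⟨P, hP⟩ := btop_split σ hn hk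
    rw [hP, List.getLastD_concat]
    split <;> rename_i h
    · exact List.Chain.nil
    · rw [(by omega : k - 1 = (k-2)+1)]
      exact bf_chain σ hn (k-2) (by omega)

lemma wtail_split (σ : ℕ → Bool) {n k : ℕ} (hn : n = 2*k) (hk : 1 ≤ k)
    (j : ℕ) (hj : j < k) :
    ∃ P C, wtail σ n k = P ++ tgt σ n j :: C ∧
      (∀ u ∈ C, u < n ∧ eltv n k u < j) ∧ (j = 0 → C = []) := by
  rcases Nat.lt_or_ge j (k-1) with h | h
  · -- j < k - 1, so k ≥ 2 and j ≤ k-2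
    obtain ⟨P, C, h1, h2⟩ := bf_split σ n (k-2) j (by omega)
    refine ⟨btop σ k ++ P, C, ?_, ?_, ?_⟩
    · rw [wtail, if_neg (by omega : ¬ k ≤ 1), h1, List.append_assoc]
    · intro u hu
      rw [h2] at hu
      by_cases hj0 : j = 0
      · rw [if_pos hj0] at hu; simp at hu
      · rw [if_neg hj0] at hu
        have := bf_mem σ hn (j-1) (by omega) u hu
        exact ⟨this.1, by omega⟩
    · intro hj0; rw [h2, if_pos hj0]
  · -- j = k - 1
    have hjk : j = k - 1 := by omega
    subst hjk
    obtain ⟨P, hP⟩ := btop_split σ hn hk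
    refine ⟨P, if k ≤ 1 then [] else blocksFrom σ n (k-2), ?_, ?_, ?_⟩
    · rw [wtail, hP, List.append_assoc]
      rfl
    · intro u hu
      revert hu; split <;> intro hu
      · simp at hu
      · rename_i hk1
        have := bf_mem σ hn (k-2) (by omega) u hu
        exact ⟨this.1, by omega⟩
    · intro hj0
      rw [if_pos (by omega : k ≤ 1)]

lemma wtail_concat0 (σ : ℕ → Bool) {n k : ℕ} (hn : n = 2*k) (hk : 1 ≤ k) :
    ∃ P, wtail σ n k = P ++ [tgt σ n 0] := by
  obtain ⟨P, C, h1, _, h0⟩ := wtail_split σ hn hk 0 (by omega)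
  exact ⟨P, by rw [h1, h0 rfl]⟩

lemma reach_chain {V U : Type*} (G : SimpleGraph V) (ins : V → Bool) (elt : V → U) :
    ∀ (L : List V) (v : V) (X : Set U), List.Chain G.Adj v L →
      Relation.ReflTransGen (decAdj G ins elt) (v, X)
        (L.getLastD v, L.foldl (fun Y u => decStep ins elt u Y) X)
  | [], v, X, _ => .refl
  | w :: L, v, X, h => by
      obtain ⟨hadj, hchain⟩ := List.chain_cons.mp h
      have ih := reach_chain G ins elt L w (decStep ins elt w X) hchain
      rw [List.getLastD_cons]
      exact Relation.ReflTransGen.head ⟨hadj, rfl⟩ ih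

end S12

/-- Exponential lower bound example: `G` is the cycle `v_1, …, v_n, v_1` (vertices
modeled as `Fin n`, with `a : Fin n` standing for `v_{a+1}`) where, for
`i = 1, …, n/2`, node `v_i` is labeled `i i` and node `v_{n+1-i}` is labeled `d i`
(the universe `{1, …, n/2}` is modeled as `Fin (n/2)`, with `j` standing for the
element `j + 1`). For every subset `S` of the universe there is a walk starting at
`v_1` whose lifting from `∅` ends at `(v_1, S)` or `(v_n, S)`; consequently, at least
`2 ^ (n/2)` nodes of `dec(G)` are reachable from `(v_1, ∅)`. -/
theorem stmt_12 (n : ℕ) (hn : Even n) (hpos : 0 < n)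
    (G : SimpleGraph (Fin n))
    (hG : ∀ a b : Fin n, G.Adj a b ↔ ((a.val + 1) % n = b.val ∨ (b.val + 1) % n = a.val))
    (ins : Fin n → Bool) (hins : ∀ a, ins a = decide (a.val < n / 2))
    (elt : Fin n → Fin (n / 2))
    (helt : ∀ a, (elt a).val = if a.val < n / 2 then a.val else n - a.val - 1) :
    (∀ S : Set (Fin (n / 2)),
      ∃ W : List (Fin n), W ≠ [] ∧ W.Chain' G.Adj ∧
        W.head? = some (⟨0, hpos⟩ : Fin n) ∧
        (W.getLast? = some (⟨0, hpos⟩ : Fin n) ∨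
          W.getLast? = some (⟨n - 1, by omega⟩ : Fin n)) ∧
        liftEndSet ins elt ∅ W = S) ∧
    2 ^ (n / 2) ≤
      Set.ncard {p : Fin n × Set (Fin (n / 2)) |
        Relation.ReflTransGen (decAdj G ins elt)
          ((⟨0, hpos⟩ : Fin n), (∅ : Set (Fin (n / 2)))) p} := by
  classical
  obtain ⟨r, hr⟩ := hn
  have hn2 : n = 2 * (n / 2) := by omega
  have hk1 : 1 ≤ (n / 2) := by omega
  set cF : ℕ → Fin n := fun m => ⟨m % n, Nat.mod_lt m hpos⟩ with hcF
  have hcFv : ∀ m, (cF m).val = m % n := fun m => rfl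
  have hAdj : ∀ a b : ℕ, S12.Rn n a b → G.Adj (cF a) (cF b) := by
    intro a b h
    rw [hG]
    exact h
  have key : ∀ S : Set (Fin (n / 2)),
      ∃ W : List (Fin n), W ≠ [] ∧ W.Chain' G.Adj ∧
        W.head? = some (⟨0, hpos⟩ : Fin n) ∧
        (W.getLast? = some (⟨0, hpos⟩ : Fin n) ∨
          W.getLast? = some (⟨n - 1, by omega⟩ : Fin n)) ∧
        liftEndSet ins elt ∅ W = S := by
    intro S
    set σ : ℕ → Bool := fun j => decide (∀ h : j < (n / 2), (⟨j, h⟩ : Fin (n / 2)) ∈ S) with hσdef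
    have hσ : ∀ (j) (h : j < (n / 2)), σ j = true ↔ (⟨j, h⟩ : Fin (n / 2)) ∈ S := by
      intro j h
      simp only [hσdef, decide_eq_true_eq]
      exact ⟨fun H => H h, fun H _ => H⟩
    refine ⟨(0 :: S12.wtail σ n (n / 2)).map cF, by simp, ?_, ?_, ?_, ?_⟩
    · rw [List.map_cons]
      show List.Chain G.Adj (cF 0) (List.map cF (S12.wtail σ n (n / 2)))
      show List.IsChain G.Adj (cF 0 :: List.map cF (S12.wtail σ n (n / 2)))
      rw [List.isChain_cons_map]
      exact List.IsChain.imp (@fun a b h => hAdj a b h) (S12.wtail_chain σ hn2 hk1)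
    · rw [List.map_cons]
      have h0 : cF 0 = ⟨0, hpos⟩ := Fin.ext (by rw [hcFv, Nat.zero_mod])
      rw [List.head?_cons, h0]
    · obtain ⟨P, hP⟩ := S12.wtail_concat0 σ hn2 hk1
      rw [hP, ← List.cons_append, List.map_append]
      simp only [List.map_cons, List.map_nil]
      rw [List.getLast?_concat]
      cases h0 : σ 0 <;> simp only [S12.tgt, h0]
      · right
        have hx : cF (n - 1 - 0) = ⟨n - 1, by omega⟩ :=
          Fin.ext (by rw [hcFv, Nat.sub_zero, Nat.mod_eq_of_lt (by omega)])
        rw [hx]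
      · left
        have hx : cF 0 = ⟨0, hpos⟩ := Fin.ext (by rw [hcFv, Nat.zero_mod])
        rw [hx]
    · show (List.map cF (0 :: S12.wtail σ n (n / 2))).tail.foldl _ ∅ = S
      rw [List.map_cons, List.tail_cons]
      ext x
      have hxk : x.val < (n / 2) := x.isLt
      obtain ⟨P, C, hsplit, hC, -⟩ := S12.wtail_split σ hn2 hk1 x.val hxk
      rw [hsplit, List.map_append, List.map_cons]
      have hCne : ∀ u' ∈ List.map cF C, elt u' ≠ x := by
        intro u' hu'
        obtain ⟨u, hu, rfl⟩ := List.mem_map.mp hu'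
        obtain ⟨hun, huel⟩ := hC u hu
        intro hEq
        have hval : (elt (cF u)).val = x.val := congrArg Fin.val hEq
        rw [helt, hcFv, Nat.mod_eq_of_lt hun] at hval
        unfold S12.eltv at huel
        revert hval huel
        split <;> omega
      have helt_t : elt (cF (S12.tgt σ n x.val)) = x := by
        apply Fin.ext
        cases h0 : σ x.val <;> simp only [S12.tgt, h0]
        · rw [helt, hcFv, Nat.mod_eq_of_lt (by omega : n - 1 - x.val < n),
            if_neg (by omega : ¬ (n - 1 - x.val < (n / 2)))]
          omega
        · rw [helt, hcFv, Nat.mod_eq_of_lt (by omega : x.val < n), if_pos hxk]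
      rw [S12.foldl_split ins elt x (cF (S12.tgt σ n x.val)) _ _ ∅ helt_t hCne]
      have hins_t : (ins (cF (S12.tgt σ n x.val)) = true) ↔ (σ x.val = true) := by
        cases h0 : σ x.val <;> simp only [S12.tgt, h0]
        · rw [hins, hcFv, Nat.mod_eq_of_lt (by omega : n - 1 - x.val < n)]
          have hnk : ¬ (n - 1 - x.val < (n / 2)) := by omega
          simp [hnk]
        · rw [hins, hcFv, Nat.mod_eq_of_lt (by omega : x.val < n)]
          simp [hxk]
      rw [hins_t, hσ x.val hxk]
  constructor
  · exact key
  · have hreach : ∀ S : Set (Fin (n / 2)), ∃ v : Fin n,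
        Relation.ReflTransGen (decAdj G ins elt)
          ((⟨0, hpos⟩ : Fin n), (∅ : Set (Fin (n / 2)))) (v, S) := by
      intro S
      obtain ⟨W, hne, hch, hhd, -, hend⟩ := key S
      cases W with
      | nil => exact absurd rfl hne
      | cons w0 L =>
        have hw0 : w0 = ⟨0, hpos⟩ := by simpa using hhd
        subst hw0
        have hchain : List.Chain G.Adj (⟨0, hpos⟩ : Fin n) L := hch
        refine ⟨L.getLastD ⟨0, hpos⟩, ?_⟩
        rw [← hend]
        exact S12.reach_chain G ins elt L ⟨0, hpos⟩ ∅ hchain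
    choose v hv using hreach
    have hinj : Function.Injective
        (fun S : Set (Fin (n / 2)) => ((v S, S) : Fin n × Set (Fin (n / 2)))) :=
      fun S1 S2 h => congrArg Prod.snd h
    calc 2 ^ (n / 2) = Nat.card (Set (Fin (n / 2))) := by simp [Nat.card_eq_fintype_card]
      _ = (Set.univ : Set (Set (Fin (n / 2)))).ncard := (Set.ncard_univ _).symm
      _ = ((fun S : Set (Fin (n / 2)) => ((v S, S) : Fin n × Set (Fin (n / 2)))) '' Set.univ).ncard :=
          (Set.ncard_image_of_injective _ hinj).symm
      _ ≤ _ := by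
          apply Set.ncard_le_ncard
          · rintro p ⟨S, -, rfl⟩
            exact hv S
          · exact Set.toFinite _
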